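/- arXiv:1711.03358 — 2 statements merged into one kernel-verified Lean document; each statement's English description precedes it below -/
import Mathlib

section
/- Let P_1,...,P_m : ℝ → (ℕ → ℝ) be families of sub-probability sequences (for each t, P_i(t)_k ≥ 0 and sum_k P_i(t)_k ≤ 1), and suppose each function t ↦ P_i(t)_j is Lipschitz with constant L(j), uniformly in i. Fix k and let L = max_{j ≤ k} L(j). Then for all x and h_1,...,h_m ≤ x, |(P_1(x-h_1) * ... * P_m(x-h_m))_k − (P_1(x-h_1) * P_2(x-h_1) * ... * P_m(x-h_1))_k| ≤ L · sum_{j=2}^m |h_1 − h_j|, where * denotes convolution of sequences: (a*b)_k = sum_{l=0}^k a_l b_{k-l}. -/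
/-!
Replace the factors `P_j(x - h_j)` by `P_j(x - h_1)` one at a time. Exchanging a factor `b` for
`a` while the other factors `Q_l` are fixed changes the `k`-th coefficient by
`∑_v (∏_{l ≠ j} Q_l(v_l)) (a(v_j) - b(v_j))`: only coefficients `n ≤ k` enter, where
`|a(n) - b(n)| ≤ L(n) |h_1 - h_j|`, and the weights `∏_{l ≠ j} Q_l(v_l)` of the remaining
sub-probability factors have total mass at most `1`.
-/

open Finset

lemma Finset.abs_sub_empty_le_sum {ι : Type*} [DecidableEq ι] (F : Finset ι → ℝ) (e : ι → ℝ)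
    (hF : ∀ i S, i ∉ S → |F (insert i S) - F S| ≤ e i) (S : Finset ι) :
    |F S - F ∅| ≤ ∑ i ∈ S, e i := by
  induction S using Finset.induction_on with
  | empty => simp
  | insert i S hiS ih =>
    calc |F (insert i S) - F ∅| ≤ |F (insert i S) - F S| + |F S - F ∅| := abs_sub_le _ _ _
      _ ≤ e i + ∑ j ∈ S, e j := add_le_add (hF i S hiS) ih
      _ = ∑ j ∈ insert i S, e j := (sum_insert hiS).symm

namespace Finset.Nat

variable {m k : ℕ}

lemma le_of_mem_antidiagonalTuple {v : Fin m → ℕ} (hv : v ∈ antidiagonalTuple m k) (i : Fin m) :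
    v i ≤ k :=
  mem_antidiagonalTuple.1 hv ▸ single_le_sum (fun j _ => Nat.zero_le (v j)) (mem_univ i)

lemma injOn_update_zero_antidiagonalTuple (i : Fin m) :
    Set.InjOn (Function.update · i 0) (antidiagonalTuple m k : Set (Fin m → ℕ)) := by
  intro v hv w hw hvw
  have hoff : ∀ j ≠ i, v j = w j := fun j hj => by
    simpa [Function.update_of_ne hj] using congrFun hvw j
  have hi : v i = w i := by
    have hv' : v i + ∑ j ∈ univ.erase i, v j = k := by
      rw [add_sum_erase _ _ (mem_univ i)]; exact mem_antidiagonalTuple.1 hv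
    have hw' : w i + ∑ j ∈ univ.erase i, w j = k := by
      rw [add_sum_erase _ _ (mem_univ i)]; exact mem_antidiagonalTuple.1 hw
    have hrest : ∑ j ∈ univ.erase i, v j = ∑ j ∈ univ.erase i, w j :=
      sum_congr rfl fun j hj => hoff j (ne_of_mem_erase hj)
    omega
  funext j
  by_cases hj : j = i
  · exact hj ▸ hi
  · exact hoff j hj

/-- On the antidiagonal `v i` is determined by the other coordinates, so setting it to `0` embeds
the antidiagonal into a box with `i`-th side `{0}`, over which the sum of products factors. -/
lemma sum_antidiagonalTuple_prod_erase_le (i : Fin m) (Q : Fin m → ℕ → ℝ)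
    (hQ : ∀ j n, 0 ≤ Q j n) :
    ∑ v ∈ antidiagonalTuple m k, ∏ j ∈ univ.erase i, Q j (v j) ≤
      ∏ j ∈ univ.erase i, ∑ n ∈ range (k + 1), Q j n := by
  set R := Function.update Q i fun _ => 1
  set t := Function.update (fun _ : Fin m => range (k + 1)) i {0}
  set f : (Fin m → ℕ) → Fin m → ℕ := (Function.update · i 0)
  have hR : ∀ j n, 0 ≤ R j n := fun j n => by
    by_cases hj : j = i
    · simp [R, hj]
    · simpa [R, hj] using hQ j n
  have hprod : ∀ v, ∏ j ∈ univ.erase i, Q j (v j) = ∏ j, R j (f v j) := fun v => by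
    rw [← mul_prod_erase univ _ (mem_univ i)]
    simp only [R, f, Function.update_self, one_mul]
    exact prod_congr rfl fun j hj => by simp [Function.update_of_ne (ne_of_mem_erase hj)]
  have himage : (antidiagonalTuple m k).image f ⊆ Fintype.piFinset t := by
    simp only [subset_iff, mem_image, Fintype.mem_piFinset]
    rintro _ ⟨v, hv, rfl⟩ j
    by_cases hj : j = i
    · simp [t, f, hj]
    · simpa [t, f, hj, Nat.lt_succ_iff] using le_of_mem_antidiagonalTuple hv j
  calc ∑ v ∈ antidiagonalTuple m k, ∏ j ∈ univ.erase i, Q j (v j)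
      = ∑ v ∈ antidiagonalTuple m k, ∏ j, R j (f v j) := sum_congr rfl fun v _ => hprod v
    _ = ∑ w ∈ (antidiagonalTuple m k).image f, ∏ j, R j (w j) := by
        rw [sum_image (injOn_update_zero_antidiagonalTuple i)]
    _ ≤ ∑ w ∈ Fintype.piFinset t, ∏ j, R j (w j) :=
        sum_le_sum_of_subset_of_nonneg himage fun w _ _ => prod_nonneg fun j _ => hR j _
    _ = ∏ j, ∑ n ∈ t j, R j n := (prod_univ_sum t R).symm
    _ = ∏ j ∈ univ.erase i, ∑ n ∈ range (k + 1), Q j n := by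
        rw [← mul_prod_erase univ _ (mem_univ i)]
        simp only [R, t, Function.update_self, sum_singleton, one_mul]
        exact prod_congr rfl fun j hj => by simp [Function.update_of_ne (ne_of_mem_erase hj)]

lemma sum_antidiagonalTuple_prod_erase_le_one (i : Fin m) (Q : Fin m → ℕ → ℝ)
    (hQ : ∀ j n, 0 ≤ Q j n) (hQ1 : ∀ j, ∑ n ∈ range (k + 1), Q j n ≤ 1) :
    ∑ v ∈ antidiagonalTuple m k, ∏ j ∈ univ.erase i, Q j (v j) ≤ 1 :=
  (sum_antidiagonalTuple_prod_erase_le i Q hQ).trans <|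
    prod_le_one (fun j _ => sum_nonneg fun n _ => hQ j n) fun j _ => hQ1 j

lemma abs_sum_antidiagonalTuple_prod_update_sub_le (Q : Fin m → ℕ → ℝ)
    (hQ : ∀ j n, 0 ≤ Q j n) (hQ1 : ∀ j, ∑ n ∈ range (k + 1), Q j n ≤ 1) (i : Fin m)
    (a : ℕ → ℝ) {ε : ℝ} (ha : ∀ n ≤ k, |a n - Q i n| ≤ ε) :
    |∑ v ∈ antidiagonalTuple m k, ∏ j, Function.update Q i a j (v j) -
        ∑ v ∈ antidiagonalTuple m k, ∏ j, Q j (v j)| ≤ ε := by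
  set C : (Fin m → ℕ) → ℝ := fun v => ∏ j ∈ univ.erase i, Q j (v j)
  have hC : ∀ v, 0 ≤ C v := fun v => prod_nonneg fun j _ => hQ j _
  have hdiff : ∀ v, ∏ j, Function.update Q i a j (v j) - ∏ j, Q j (v j) =
      C v * (a (v i) - Q i (v i)) := fun v => by
    rw [← mul_prod_erase univ _ (mem_univ i), ← mul_prod_erase univ (fun j => Q j (v j))
      (mem_univ i), prod_congr rfl fun j hj => by rw [Function.update_of_ne (ne_of_mem_erase hj)]]
    simp only [C, Function.update_self]
    ring
  have hε : 0 ≤ ε := (abs_nonneg _).trans (ha 0 k.zero_le)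
  calc |∑ v ∈ antidiagonalTuple m k, ∏ j, Function.update Q i a j (v j) -
        ∑ v ∈ antidiagonalTuple m k, ∏ j, Q j (v j)|
      = |∑ v ∈ antidiagonalTuple m k, C v * (a (v i) - Q i (v i))| := by
        rw [← sum_sub_distrib, sum_congr rfl fun v _ => hdiff v]
    _ ≤ ∑ v ∈ antidiagonalTuple m k, C v * ε := by
        refine (abs_sum_le_sum_abs _ _).trans (sum_le_sum fun v hv => ?_)
        rw [abs_mul, abs_of_nonneg (hC v)]
        exact mul_le_mul_of_nonneg_left (ha _ (le_of_mem_antidiagonalTuple hv i)) (hC v)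
    _ = (∑ v ∈ antidiagonalTuple m k, C v) * ε := (sum_mul _ _ _).symm
    _ ≤ ε := mul_le_of_le_one_left hε (sum_antidiagonalTuple_prod_erase_le_one i Q hQ hQ1)

lemma abs_sum_antidiagonalTuple_prod_sub_le (Q Q' : Fin m → ℕ → ℝ)
    (hQ : ∀ j n, 0 ≤ Q j n) (hQ1 : ∀ j, ∑ n ∈ range (k + 1), Q j n ≤ 1)
    (hQ' : ∀ j n, 0 ≤ Q' j n) (hQ'1 : ∀ j, ∑ n ∈ range (k + 1), Q' j n ≤ 1)
    (ε : Fin m → ℝ) (hε : ∀ j, ∀ n ≤ k, |Q' j n - Q j n| ≤ ε j) :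
    |∑ v ∈ antidiagonalTuple m k, ∏ j, Q' j (v j) -
        ∑ v ∈ antidiagonalTuple m k, ∏ j, Q j (v j)| ≤ ∑ j, ε j := by
  set mix : Finset (Fin m) → Fin m → ℕ → ℝ := fun S j => if j ∈ S then Q' j else Q j
  have hmix : ∀ S j n, 0 ≤ mix S j n := fun S j n => by
    by_cases hj : j ∈ S <;> simp [mix, hj, hQ, hQ']
  have hmix1 : ∀ S j, ∑ n ∈ range (k + 1), mix S j n ≤ 1 := fun S j => by
    by_cases hj : j ∈ S <;> simp [mix, hj, hQ1, hQ'1]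
  have hinsert : ∀ i S, i ∉ S → mix (insert i S) = Function.update (mix S) i (Q' i) :=
    fun i S hiS => funext fun j => by by_cases hj : j = i <;> simp [mix, hj]
  have htelescope := abs_sub_empty_le_sum (fun S => ∑ v ∈ antidiagonalTuple m k, ∏ j, mix S j (v j)) ε
    (fun i S hiS => by
      rw [hinsert i S hiS]
      refine abs_sum_antidiagonalTuple_prod_update_sub_le _ (hmix S) (hmix1 S) i _ fun n hn => ?_
      simpa [mix, hiS] using hε i n hn) univ
  simpa [mix] using htelescope

end Finset.Nat

/-- Difference-in-times lemma: convolving `m` Lipschitz sub-probability sequences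
evaluated at shifted times versus all at the same time `x - h 0`. -/
theorem conv_time_difference (m : ℕ) (hm : 0 < m)
    (P : Fin m → ℝ → ℕ → ℝ) (L : ℕ → ℝ)
    (hnn : ∀ i t j, 0 ≤ P i t j)
    (hsummable : ∀ i t, Summable (fun j => P i t j))
    (hsub : ∀ i t, ∑' j, P i t j ≤ 1)
    (hLip : ∀ i j s t, |P i s j - P i t j| ≤ L j * |s - t|)
    (k : ℕ) (x : ℝ) (h : Fin m → ℝ) :
    |(∑ v ∈ Finset.Nat.antidiagonalTuple m k, ∏ i, P i (x - h i) (v i)) -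
        ∑ v ∈ Finset.Nat.antidiagonalTuple m k, ∏ i, P i (x - h ⟨0, hm⟩) (v i)| ≤
      ((Finset.range (k + 1)).sup' (by simp) L) *
        ∑ i ∈ Finset.univ.erase (⟨0, hm⟩ : Fin m), |h ⟨0, hm⟩ - h i| := by
  set i₀ : Fin m := ⟨0, hm⟩
  set Lₖ := (range (k + 1)).sup' (by simp) L
  have hpartial : ∀ i t, ∑ n ∈ range (k + 1), P i t n ≤ 1 := fun i t =>
    ((hsummable i t).sum_le_tsum _ fun n _ => hnn i t n).trans (hsub i t)
  have hstep : ∀ j, ∀ n ≤ k, |P j (x - h i₀) n - P j (x - h j) n| ≤ Lₖ * |h i₀ - h j| :=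
    fun j n hn => by
      calc |P j (x - h i₀) n - P j (x - h j) n| ≤ L n * |h i₀ - h j| := by
            simpa [abs_sub_comm] using hLip j n (x - h i₀) (x - h j)
        _ ≤ Lₖ * |h i₀ - h j| :=
            mul_le_mul_of_nonneg_right (le_sup' L (mem_range.2 (Nat.lt_succ_of_le hn)))
              (abs_nonneg _)
  have hswap := Finset.Nat.abs_sum_antidiagonalTuple_prod_sub_le _ _ (fun j => hnn j _)
    (fun j => hpartial j _) (fun j => hnn j _) (fun j => hpartial j _) _ hstep
  rw [← add_sum_erase _ _ (mem_univ i₀), sub_self, abs_zero, mul_zero, zero_add] at hswap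
  rwa [abs_sub_comm, mul_sum]
end

section
/- Let ξ^1,...,ξ^m be independent pure-birth processes, each starting at 0 and jumping from state j to j+1 at rate λ_j = j + 1 + δ/m, where m ∈ ℕ, m ≥ 1, δ > −m. Then for each fixed t ≥ 0, the sum ξ^1_t + ... + ξ^m_t has the same distribution as a single pure-birth process started at 0 with rates λ̄_k = k + m + δ, evaluated at time t. -/
/-! The law `R t` of `ξ¹_t + ⋯ + ξᵐ_t` is the convolution of the laws `P i t`. Differentiating
it with the product rule and the forward equations of the `P i`, the outflow terms add up on
`{v | Σ vᵢ = k}` to `Σ λ(vᵢ) = k + m + δ` times `R t k`, because the rates are affine with a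
common slope; after lowering the coordinate that has just jumped, the inflow terms add up to
`(k - 1 + m + δ) R t (k - 1)`. So `R` solves the forward equations of `Q`, with the same initial
law, and these linear equations have a unique solution, found state by state. -/

open Finset Finset.Nat

theorem eq_of_hasDerivAt_mul_add {a : ℝ} {c f g : ℝ → ℝ}
    (hf : ∀ t, HasDerivAt f (a * f t + c t) t) (hg : ∀ t, HasDerivAt g (a * g t + c t) t)
    (h0 : f 0 = g 0) : f = g := by
  refine ODE_solution_unique_univ (v := fun t x => a * x + c t) (s := fun _ => Set.univ)
    (K := ‖a‖₊) (fun t => (LipschitzWith.of_dist_le_mul fun x y => ?_).lipschitzOnWith)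
    (fun t => ⟨hf t, trivial⟩) (fun t => ⟨hg t, trivial⟩) h0
  simp [Real.dist_eq, ← mul_sub, abs_mul]

theorem Finset.sum_prod_erase_mul_mul {ι R : Type*} [DecidableEq ι] [CommSemiring R]
    (s : Finset ι) (x y : ι → R) :
    ∑ i ∈ s, (∏ j ∈ s.erase i, x j) * (y i * x i) = (∑ i ∈ s, y i) * ∏ i ∈ s, x i := by
  rw [sum_mul]
  refine sum_congr rfl fun i hi => ?_
  rw [← prod_erase_mul s x hi]
  ring

namespace PureBirth

def inflow (rate : ℕ → ℝ) (q : ℕ → ℝ) : ℕ → ℝ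
  | 0 => 0
  | k + 1 => rate k * q k

def IsForwardSolution (rate : ℕ → ℝ) (p : ℝ → ℕ → ℝ) : Prop :=
  ∀ t k, HasDerivAt (fun s => p s k) (-rate k * p t k + inflow rate (p t) k) t

theorem IsForwardSolution.of_succ {rate : ℕ → ℝ} {p : ℝ → ℕ → ℝ}
    (h0 : ∀ t, HasDerivAt (fun s => p s 0) (-rate 0 * p t 0) t)
    (hsucc : ∀ t k, HasDerivAt (fun s => p s (k + 1))
      (-rate (k + 1) * p t (k + 1) + rate k * p t k) t) :
    IsForwardSolution rate p
  | t, 0 => by simpa [inflow] using h0 t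
  | t, k + 1 => hsucc t k

theorem IsForwardSolution.unique {rate : ℕ → ℝ} {p q : ℝ → ℕ → ℝ}
    (hp : IsForwardSolution rate p) (hq : IsForwardSolution rate q) (h0 : p 0 = q 0) :
    p = q := by
  suffices h : ∀ k, (fun t => p t k) = fun t => q t k from
    funext fun t => funext fun k => congrFun (h k) t
  intro k
  induction k with
  | zero => exact eq_of_hasDerivAt_mul_add (c := fun _ => 0) (hp · 0) (hq · 0) (congrFun h0 0)
  | succ k ih =>
    refine eq_of_hasDerivAt_mul_add (fun t => ?_) (hq · (k + 1)) (congrFun h0 (k + 1))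
    simpa only [inflow, congrFun ih t] using hp t (k + 1)

variable {m : ℕ}

def convolution (x : Fin m → ℕ → ℝ) (n : ℕ) : ℝ :=
  ∑ v ∈ antidiagonalTuple m n, ∏ i, x i (v i)

theorem convolution_single_zero :
    convolution (fun _ : Fin m => Pi.single 0 1) = Pi.single 0 1 := by
  funext n
  rcases eq_or_ne n 0 with rfl | hn
  · simp [convolution, antidiagonalTuple_zero_right]
  · rw [Pi.single_eq_of_ne hn]
    refine sum_eq_zero fun v hv => ?_
    obtain ⟨i, hi⟩ : ∃ i, v i ≠ 0 := by
      by_contra! h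
      simp [mem_antidiagonalTuple, h, eq_comm, hn] at hv
    exact prod_eq_zero (mem_univ i) (Pi.single_eq_of_ne hi 1)

theorem sum_antidiagonalTuple_succ_eq_sum_add_single (i : Fin m) (n : ℕ)
    {g : (Fin m → ℕ) → ℝ} (hg : ∀ v, v i = 0 → g v = 0) :
    ∑ v ∈ antidiagonalTuple m (n + 1), g v =
      ∑ w ∈ antidiagonalTuple m n, g (w + Pi.single i 1) := by
  symm
  refine sum_bij_ne_zero (fun w _ _ => w + Pi.single i 1) ?_
    (fun _ _ _ _ _ _ h => add_right_cancel h) ?_ fun _ _ _ => rfl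
  · intro w hw _
    rw [mem_antidiagonalTuple] at hw ⊢
    simp [sum_add_distrib, hw]
  · intro v hv hgv
    have hle : Pi.single i 1 ≤ v := fun j => by
      rcases eq_or_ne j i with rfl | hj
      · simpa [Nat.one_le_iff_ne_zero] using fun h => hgv (hg v h)
      · simp [hj]
    have hv' : v - Pi.single i 1 + Pi.single i 1 = v := tsub_add_cancel_of_le hle
    refine ⟨v - Pi.single i 1, ?_, by rwa [hv'], hv'⟩
    rw [mem_antidiagonalTuple] at hv ⊢
    rw [← hv'] at hv
    simpa [sum_add_distrib] using hv

theorem sum_sum_prod_erase_mul_affine (a : ℝ) (c : Fin m → ℝ) (x : Fin m → ℕ → ℝ) (n : ℕ) :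
    ∑ v ∈ antidiagonalTuple m n, ∑ i, (∏ j ∈ univ.erase i, x j (v j)) *
        ((a * v i + c i) * x i (v i)) = (a * n + ∑ i, c i) * convolution x n := by
  rw [convolution, mul_sum]
  refine sum_congr rfl fun v hv => ?_
  rw [sum_prod_erase_mul_mul, sum_add_distrib, ← mul_sum, ← (mem_antidiagonalTuple.mp hv)]
  push_cast
  rfl

theorem sum_sum_prod_erase_mul_inflow (a : ℝ) (c : Fin m → ℝ) (x : Fin m → ℕ → ℝ) (n : ℕ) :
    ∑ v ∈ antidiagonalTuple m n, ∑ i, (∏ j ∈ univ.erase i, x j (v j)) *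
        inflow (fun k => a * k + c i) (x i) (v i) =
      inflow (fun k => a * k + ∑ i, c i) (convolution x) n := by
  cases n with
  | zero => simp [antidiagonalTuple_zero_right, inflow]
  | succ n =>
    rw [inflow, ← sum_sum_prod_erase_mul_affine, sum_comm, sum_comm (s := antidiagonalTuple m n)]
    refine sum_congr rfl fun i _ => ?_
    rw [sum_antidiagonalTuple_succ_eq_sum_add_single i n fun v hv => by simp [hv, inflow]]
    refine sum_congr rfl fun w _ => ?_
    have hprod : ∏ j ∈ univ.erase i, x j ((w + Pi.single i 1 : Fin m → ℕ) j) =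
        ∏ j ∈ univ.erase i, x j (w j) :=
      prod_congr rfl fun j hj => by simp [Pi.single_eq_of_ne (ne_of_mem_erase hj)]
    rw [hprod, Pi.add_apply, Pi.single_eq_same]
    rfl

theorem hasDerivAt_convolution {x : ℝ → Fin m → ℕ → ℝ} {x' : Fin m → ℕ → ℝ} {t : ℝ} (n : ℕ)
    (hx : ∀ i k, HasDerivAt (fun s => x s i k) (x' i k) t) :
    HasDerivAt (fun s => convolution (x s) n)
      (∑ v ∈ antidiagonalTuple m n, ∑ i, (∏ j ∈ univ.erase i, x t j (v j)) * x' i (v i)) t := by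
  refine HasDerivAt.fun_sum fun v _ => ?_
  simpa only [smul_eq_mul] using HasDerivAt.fun_finsetProd fun i _ => hx i (v i)

theorem IsForwardSolution.convolution {a : ℝ} {c : Fin m → ℝ} {p : Fin m → ℝ → ℕ → ℝ}
    (hp : ∀ i, IsForwardSolution (fun k => a * k + c i) (p i)) :
    IsForwardSolution (fun k => a * k + ∑ i, c i) (fun t => convolution (fun i => p i t)) := by
  intro t n
  convert hasDerivAt_convolution n (x := fun s i => p i s) fun i k => hp i t k using 1
  simp only [mul_add, sum_add_distrib, neg_mul, mul_neg, sum_neg_distrib,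
    sum_sum_prod_erase_mul_affine, sum_sum_prod_erase_mul_inflow]

end PureBirth

theorem sum_birth_processes_distribution_general (m : ℕ) (hm : 1 ≤ m) (δ : ℝ)
    (P : Fin m → ℝ → ℕ → ℝ) (Q : ℝ → ℕ → ℝ)
    -- initial conditions: each process starts at 0
    (hP00 : ∀ i, P i 0 0 = 1) (hP0 : ∀ i k, k ≠ 0 → P i 0 k = 0)
    (hQ00 : Q 0 0 = 1) (hQ0 : ∀ k, k ≠ 0 → Q 0 k = 0)
    -- forward equations with rates λ_j = j + 1 + δ/m for each copy
    (hPode0 : ∀ i t, HasDerivAt (fun s => P i s 0) (-(1 + δ / m) * P i t 0) t)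
    (hPode : ∀ i t k, HasDerivAt (fun s => P i s (k + 1))
      (-((k : ℝ) + 1 + 1 + δ / m) * P i t (k + 1) + ((k : ℝ) + 1 + δ / m) * P i t k) t)
    -- forward equations with rates λ̄_k = k + m + δ for the combined process
    (hQode0 : ∀ t, HasDerivAt (fun s => Q s 0) (-((m : ℝ) + δ) * Q t 0) t)
    (hQode : ∀ t k, HasDerivAt (fun s => Q s (k + 1))
      (-((k : ℝ) + 1 + m + δ) * Q t (k + 1) + ((k : ℝ) + m + δ) * Q t k) t) :
    ∀ t : ℝ, 0 ≤ t → ∀ k : ℕ,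
      ∑ v ∈ Finset.Nat.antidiagonalTuple m k, ∏ i, P i t (v i) = Q t k := by
  have hP : ∀ i, PureBirth.IsForwardSolution (fun j => 1 * j + (1 + δ / m)) (P i) := fun i =>
    .of_succ (fun t => by simpa using hPode0 i t) fun t k => by
      convert hPode i t k using 2 <;> push_cast <;> ring
  have hrate : ∑ _i : Fin m, (1 + δ / m) = m + δ := by
    have : (m : ℝ) ≠ 0 := Nat.cast_ne_zero.mpr (by omega)
    simp only [sum_const, card_univ, Fintype.card_fin, nsmul_eq_mul]
    field_simp
  have hQ : PureBirth.IsForwardSolution (fun k => 1 * k + ∑ _i : Fin m, (1 + δ / m)) Q := by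
    rw [hrate]
    exact .of_succ (fun t => by simpa using hQode0 t) fun t k => by
      convert hQode t k using 2 <;> push_cast <;> ring
  have single_zero (q : ℕ → ℝ) (h0 : q 0 = 1) (hne : ∀ k, k ≠ 0 → q k = 0) :
      q = Pi.single 0 1 := funext fun k => by
    rw [Pi.single_apply]
    split_ifs with hk
    exacts [hk ▸ h0, hne k hk]
  have h := (PureBirth.IsForwardSolution.convolution hP).unique hQ <| by
    simp [single_zero _ (hP00 _) (hP0 _), single_zero _ hQ00 hQ0,
      PureBirth.convolution_single_zero]
  exact fun t _ k => congrFun (congrFun h t) k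

/-- The sum of `m` independent pure-birth processes with rates `λ_j = j + 1 + δ/m`
has, at each fixed time `t ≥ 0`, the same distribution as a single pure-birth
process with rates `λ̄_k = k + m + δ`.  Distributions are encoded by their
(unique) solutions of the Kolmogorov forward equations, and the distribution of
the sum of independent variables is the convolution of the marginals. -/
theorem sum_birth_processes_distribution (m : ℕ) (hm : 1 ≤ m) (δ : ℝ) (hδ : -(m : ℝ) < δ)
    (P : Fin m → ℝ → ℕ → ℝ) (Q : ℝ → ℕ → ℝ)
    -- initial conditions: each process starts at 0
    (hP00 : ∀ i, P i 0 0 = 1) (hP0 : ∀ i k, k ≠ 0 → P i 0 k = 0)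
    (hQ00 : Q 0 0 = 1) (hQ0 : ∀ k, k ≠ 0 → Q 0 k = 0)
    -- forward equations with rates λ_j = j + 1 + δ/m for each copy
    (hPode0 : ∀ i t, HasDerivAt (fun s => P i s 0) (-(1 + δ / m) * P i t 0) t)
    (hPode : ∀ i t k, HasDerivAt (fun s => P i s (k + 1))
      (-((k : ℝ) + 1 + 1 + δ / m) * P i t (k + 1) + ((k : ℝ) + 1 + δ / m) * P i t k) t)
    -- forward equations with rates λ̄_k = k + m + δ for the combined process
    (hQode0 : ∀ t, HasDerivAt (fun s => Q s 0) (-((m : ℝ) + δ) * Q t 0) t)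
    (hQode : ∀ t k, HasDerivAt (fun s => Q s (k + 1))
      (-((k : ℝ) + 1 + m + δ) * Q t (k + 1) + ((k : ℝ) + m + δ) * Q t k) t) :
    ∀ t : ℝ, 0 ≤ t → ∀ k : ℕ,
      ∑ v ∈ Finset.Nat.antidiagonalTuple m k, ∏ i, P i t (v i) = Q t k :=
  sum_birth_processes_distribution_general m hm δ P Q hP00 hP0 hQ00 hQ0 hPode0 hPode hQode0 hQode
end
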